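/- Let X ⊂ E and Y ⊂ F be standard Bessel sequences in Hilbert C*-modules over a unital C*-algebra A. If U is a compact operator on ℓ²(A) (i.e., U ∈ K(ℓ²(A)), the norm-closure of finite rank 'compact' module operators), then the generalized Bessel multiplier M_{U,Y,X} = T_Y* U T_X is a compact operator in K(E,F). -/

import Mathlib

open scoped RightActions

/-- The Hilbert C⋆-module class as it stood in the older Mathlib (right `Aᵐᵒᵖ`-action,
`⟪x, y <• a⟫ = ⟪x, y⟫ * a`); Mathlib's `CStarModule` now uses a left action. -/
class CStarModuleRight (A : outParam Type*) (E : Type*) [NonUnitalSemiring A] [StarRing A] [Module ℂ A]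
    [AddCommGroup E] [Module ℂ E] [PartialOrder A] [SMul Aᵐᵒᵖ E] [Norm A] [Norm E]
    extends Inner A E where
  inner_add_right {x} {y} {z} : inner x (y + z) = inner x y + inner x z
  inner_self_nonneg {x} : 0 ≤ inner x x
  inner_self {x} : inner x x = 0 ↔ x = 0
  inner_op_smul_right {a : A} {x y : E} : inner x (y <• a) = inner x y * a
  inner_smul_right_complex {z : ℂ} {x} {y} : inner x (z • y) = z • inner x y
  star_inner x y : star (inner x y) = inner y x
  norm_eq_sqrt_norm_inner_self x : ‖x‖ = √‖inner x x‖

/-- Two maps between Hilbert C*-modules form an adjoint pair: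
`⟪T x, y⟫ = ⟪x, S y⟫` for all `x, y`. -/
def IsAdjointPairCM (A : Type*) [CStarAlgebra A] [PartialOrder A] [StarOrderedRing A]
    {E F : Type*} [NormedAddCommGroup E] [NormedSpace ℂ E] [SMul Aᵐᵒᵖ E] [CStarModuleRight A E]
    [NormedAddCommGroup F] [NormedSpace ℂ F] [SMul Aᵐᵒᵖ F] [CStarModuleRight A F]
    (T : E → F) (S : F → E) : Prop :=
  ∀ (x : E) (y : F), (inner A (T x) y) = inner A x (S y)

section Defs
variable {A : Type*} [CStarAlgebra A] [PartialOrder A] [StarOrderedRing A]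
variable {E L : Type*} [NormedAddCommGroup E] [NormedSpace ℂ E] [SMul Aᵐᵒᵖ E] [CStarModuleRight A E]
  [NormedAddCommGroup L] [NormedSpace ℂ L] [SMul Aᵐᵒᵖ L] [CStarModuleRight A L]

/-- `x` is a standard Bessel sequence with Bessel bound `D`:
`∑ₙ ⟪v, xₙ⟫⟪xₙ, v⟫` is norm-convergent and bounded by `D ⟪v, v⟫`. -/
def IsBesselSeq (x : ℕ → E) (D : ℝ) : Prop :=
  ∀ v : E, Summable (fun n => (inner A v (x n)) * inner A (x n) v) ∧
    (∑' n, (inner A v (x n)) * inner A (x n) v) ≤ D • (inner A v v)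

/-- `x` is a standard frame with frame bounds `C`, `D`. -/
def IsFrameSeq (x : ℕ → E) (C D : ℝ) : Prop :=
  IsBesselSeq x D ∧
    ∀ v : E, C • (inner A v v) ≤ ∑' n, (inner A v (x n)) * inner A (x n) v

/-- `e` is the standard orthonormal basis of (a copy of) `ℓ²(A)`:
orthonormality together with the reconstruction `v = ∑ₙ eₙ • ⟪eₙ, v⟫`. -/
def IsStdBasis (e : ℕ → L) : Prop :=
  (∀ m n : ℕ, (inner A (e m) (e n)) = if m = n then 1 else 0) ∧
    ∀ v : L, HasSum (fun n => e n <• (inner A (e n) v)) v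

/-- `T` is the analysis operator of the sequence `x`, relative to the standard
basis `e` of `ℓ²(A)`: the `n`-th coefficient of `T v` is `⟪xₙ, v⟫`. -/
def IsAnalysisOp (e : ℕ → L) (x : ℕ → E) (T : E → L) : Prop :=
  ∀ (v : E) (n : ℕ), (inner A (e n) (T v)) = inner A (x n) v

/-- `S` is the synthesis operator of the sequence `x`: `S a = ∑ₙ xₙ • aₙ`. -/
def IsSynthesisOp (e : ℕ → L) (x : ℕ → E) (S : L → E) : Prop :=
  ∀ a : L, HasSum (fun n => x n <• (inner A (e n) a)) (S a)

/-- `x` is a modular Riesz basis: the image of the standard basis `e` of `ℓ²(A)`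
under an adjointable invertible operator. -/
def IsModularRieszBasis (e : ℕ → L) (x : ℕ → E) : Prop :=
  ∃ (V : L →L[ℂ] E) (Vinv : E →L[ℂ] L) (Vstar : E →L[ℂ] L),
    Function.LeftInverse Vinv V ∧ Function.RightInverse Vinv V ∧
      IsAdjointPairCM A V Vstar ∧ ∀ n, V (e n) = x n

end Defs

variable {A : Type*} [CStarAlgebra A] [PartialOrder A] [StarOrderedRing A]
variable {E F L : Type*}
  [NormedAddCommGroup E] [NormedSpace ℂ E] [SMul Aᵐᵒᵖ E] [CStarModuleRight A E]
  [NormedAddCommGroup F] [NormedSpace ℂ F] [SMul Aᵐᵒᵖ F] [CStarModuleRight A F]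
  [NormedAddCommGroup L] [NormedSpace ℂ L] [SMul Aᵐᵒᵖ L] [CStarModuleRight A L]

/-- The elementary ("rank one") operators `Θ_{x,y} : z ↦ y • ⟪x, z⟫`. -/
def elementaryOps : Set (E →L[ℂ] F) :=
  {T | ∃ (x : E) (y : F), ∀ z : E, T z = y <• (inner A x z)}


/-!
`K(E, F)` is a closed subspace and `V ↦ T_Y* ∘ V ∘ T_X` is continuous and linear, so it suffices
to treat an elementary `U = Θ_{a,b}`. Being adjointable, `T_Y*` is `A`-linear, so
`T_Y* ∘ Θ_{a,b} = Θ_{a, T_Y* b}`. On the other side, expanding `a = ∑ₙ eₙ ⟪eₙ, a⟫` in the standard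
basis and using `⟪eₙ, T_X v⟫ = ⟪xₙ, v⟫` gives the norm-convergent series
`Θ_{a,b} ∘ T_X = ∑ₙ Θ_{xₙ ⟪eₙ, a⟫, b}` of elementary operators.
-/

open MulOpposite in
-- Lets the right-module API below be read off Mathlib's `CStarModule`, notably Cauchy–Schwarz.
instance CStarModuleRight.toCStarModuleMulOpposite {A G : Type*} [CStarAlgebra A] [PartialOrder A]
    [NormedAddCommGroup G] [NormedSpace ℂ G] [SMul Aᵐᵒᵖ G] [CStarModuleRight A G] :
    CStarModule Aᵐᵒᵖ G where
  inner x y := op (inner A x y)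
  inner_add_right := by simp [CStarModuleRight.inner_add_right]
  inner_self_nonneg := CStarModuleRight.inner_self_nonneg
  inner_self := op_eq_zero_iff _ |>.trans CStarModuleRight.inner_self
  inner_op_smul_right {a x y} := by
    rw [← op_unop a, ← op_mul]
    exact congrArg op CStarModuleRight.inner_op_smul_right
  inner_smul_right_complex := by simp [CStarModuleRight.inner_smul_right_complex]
  star_inner x y := by rw [← op_star, CStarModuleRight.star_inner]
  norm_eq_sqrt_norm_inner_self := CStarModuleRight.norm_eq_sqrt_norm_inner_self

namespace CStarModuleRight

section API

variable {A : Type*} [CStarAlgebra A] [PartialOrder A]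
variable {G : Type*} [NormedAddCommGroup G] [NormedSpace ℂ G] [SMul Aᵐᵒᵖ G] [CStarModuleRight A G]

theorem inner_add_left {x y z : G} : inner A (x + y) z = inner A x z + inner A y z :=
  MulOpposite.op_injective
    (CStarModule.inner_add_left (A := Aᵐᵒᵖ) (x := x) (y := y) (z := z))

theorem inner_sub_right {x y z : G} : inner A x (y - z) = inner A x y - inner A x z :=
  MulOpposite.op_injective
    (CStarModule.inner_sub_right (A := Aᵐᵒᵖ) (x := x) (y := y) (z := z))

theorem inner_op_smul_left {a : A} {x y : G} : inner A (x <• a) y = star a * inner A x y :=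
  MulOpposite.op_injective
    (CStarModule.inner_op_smul_left (a := MulOpposite.op a) (x := x) (y := y))

theorem norm_sq_eq {x : G} : ‖x‖ ^ 2 = ‖inner A x x‖ :=
  CStarModule.norm_sq_eq Aᵐᵒᵖ (x := x)

theorem norm_inner_le [StarOrderedRing A] {x y : G} : ‖inner A x y‖ ≤ ‖x‖ * ‖y‖ :=
  CStarModule.norm_inner_le (A := Aᵐᵒᵖ) G

theorem ext_inner {u u' : G} (h : ∀ w : G, inner A w u = inner A w u') : u = u' := by
  rw [← sub_eq_zero, ← inner_self (A := A), inner_sub_right, h, sub_self]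

theorem op_smul_add (w : G) (c d : A) : w <• (c + d) = w <• c + w <• d :=
  ext_inner fun u => by simp only [inner_op_smul_right, inner_add_right, mul_add]

theorem op_smul_complex_smul (w : G) (z : ℂ) (c : A) : w <• (z • c) = z • (w <• c) :=
  ext_inner fun u => by simp only [inner_op_smul_right, inner_smul_right_complex, mul_smul_comm]

theorem norm_op_smul_le (w : G) (c : A) : ‖w <• c‖ ≤ ‖w‖ * ‖c‖ := by
  have h : ‖w <• c‖ ^ 2 ≤ (‖w‖ * ‖c‖) ^ 2 := calc
    ‖w <• c‖ ^ 2 = ‖star c * inner A w w * c‖ := by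
      rw [norm_sq_eq, inner_op_smul_left, inner_op_smul_right, mul_assoc]
    _ ≤ ‖c‖ * ‖inner A w w‖ * ‖c‖ := by
      grw [norm_mul_le, norm_mul_le, norm_star]
    _ = (‖w‖ * ‖c‖) ^ 2 := by rw [← norm_sq_eq]; ring
  exact (pow_le_pow_iff_left₀ (norm_nonneg _) (by positivity) two_ne_zero).mp h

end API

end CStarModuleRight

theorem ContinuousLinearMap.map_mem_closure_span {R M N : Type*} [Semiring R]
    [AddCommMonoid M] [Module R M] [TopologicalSpace M]
    [AddCommMonoid N] [Module R N] [TopologicalSpace N] [ContinuousAdd N] [ContinuousConstSMul R N]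
    (f : M →L[R] N) {s : Set M} {t : Set N} (hst : Set.MapsTo f s (closure (Submodule.span R t)))
    {a : M} (ha : a ∈ closure (Submodule.span R s : Set M)) :
    f a ∈ closure (Submodule.span R t : Set N) := by
  have hspan : Submodule.span R s ≤ (Submodule.span R t).topologicalClosure.comap (f : M →ₗ[R] N) :=
    Submodule.span_le.mpr fun _ hv => hst hv
  simpa only [closure_closure] using
    map_mem_closure (t := closure (Submodule.span R t : Set N)) f.continuous ha fun _ hv => hspan hv

section Multiplier

open CStarModuleRight

variable {A : Type*} [CStarAlgebra A] [PartialOrder A]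
  {E F G L : Type*} [NormedAddCommGroup E] [NormedSpace ℂ E] [SMul Aᵐᵒᵖ E] [CStarModuleRight A E]
  [NormedAddCommGroup F] [NormedSpace ℂ F] [SMul Aᵐᵒᵖ F]
  [NormedAddCommGroup G] [NormedSpace ℂ G] [SMul Aᵐᵒᵖ G]
  [NormedAddCommGroup L] [NormedSpace ℂ L] [SMul Aᵐᵒᵖ L]

variable (A E F) in
/-- The paper's `K(E, F)`. -/
def compactOps : Set (E →L[ℂ] F) :=
  closure (Submodule.span ℂ (elementaryOps (A := A) (E := E) (F := F)))

theorem comp_mem_elementaryOps {S : F →L[ℂ] G} (hS : ∀ (w : F) (c : A), S (w <• c) = S w <• c)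
    {T : E →L[ℂ] F} (hT : T ∈ elementaryOps (A := A)) : S.comp T ∈ elementaryOps (A := A) := by
  obtain ⟨x₀, y₀, hT⟩ := hT
  exact ⟨x₀, S y₀, fun z => by rw [ContinuousLinearMap.comp_apply, hT, hS]⟩

theorem comp_mem_compactOps {S : F →L[ℂ] G} (hS : ∀ (w : F) (c : A), S (w <• c) = S w <• c)
    {V : E →L[ℂ] F} (hV : V ∈ compactOps A E F) : S.comp V ∈ compactOps A E G :=
  (ContinuousLinearMap.compL ℂ E F G S).map_mem_closure_span
    (fun _ hT => subset_closure (Submodule.subset_span (comp_mem_elementaryOps hS hT))) hV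

variable [StarOrderedRing A] [CStarModuleRight A F] [CStarModuleRight A G] [CStarModuleRight A L]

theorem IsAdjointPairCM.map_op_smul {T : E → F} {S : F → E} (h : IsAdjointPairCM A T S)
    (w : F) (c : A) : S (w <• c) = S w <• c :=
  ext_inner fun u => by rw [← h, inner_op_smul_right, h, inner_op_smul_right]

/-- `Θ_{x₀,y₀}`. -/
noncomputable def elemOp (x₀ : E) (y₀ : F) : E →L[ℂ] F :=
  LinearMap.mkContinuous
    { toFun z := y₀ <• inner A x₀ z
      map_add' z z' := by rw [CStarModuleRight.inner_add_right, op_smul_add]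
      map_smul' r z := by rw [inner_smul_right_complex, op_smul_complex_smul]; rfl }
    (‖y₀‖ * ‖x₀‖)
    fun z => calc
      ‖y₀ <• inner A x₀ z‖ ≤ ‖y₀‖ * ‖inner A x₀ z‖ := norm_op_smul_le _ _
      _ ≤ ‖y₀‖ * ‖x₀‖ * ‖z‖ := by grw [CStarModuleRight.norm_inner_le, mul_assoc]

@[simp]
theorem elemOp_apply (x₀ : E) (y₀ : F) (z : E) : elemOp (A := A) x₀ y₀ z = y₀ <• inner A x₀ z :=
  rfl

theorem elemOp_mem_elementaryOps (x₀ : E) (y₀ : F) : elemOp x₀ y₀ ∈ elementaryOps (A := A) :=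
  ⟨x₀, y₀, fun _ => rfl⟩

theorem elemOp_add_left (x₀ x₁ : E) (y₀ : F) :
    elemOp (A := A) (x₀ + x₁) y₀ = elemOp x₀ y₀ + elemOp x₁ y₀ := by
  ext z
  simp only [add_apply, elemOp_apply, CStarModuleRight.inner_add_left, op_smul_add]

theorem norm_elemOp_le (x₀ : E) (y₀ : F) : ‖elemOp (A := A) x₀ y₀‖ ≤ ‖y₀‖ * ‖x₀‖ :=
  LinearMap.mkContinuous_norm_le _ (by positivity) _

theorem elemOp_comp_of_isAnalysisOp {e : ℕ → L} {x : ℕ → E} {T : E →L[ℂ] L}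
    (hT : IsAnalysisOp e x T) (n : ℕ) (c : A) (y₀ : G) :
    (elemOp (e n <• c) y₀).comp T = elemOp (x n <• c) y₀ := by
  ext v
  simp [CStarModuleRight.inner_op_smul_left, hT v n]

theorem elemOp_comp_mem_compactOps {e : ℕ → L} {x : ℕ → E} {T : E →L[ℂ] L}
    (he : IsStdBasis e) (hT : IsAnalysisOp e x T) (x₀ : L) (y₀ : G) :
    (elemOp x₀ y₀).comp T ∈ compactOps A E G := by
  let Φ : L →+ (E →L[ℂ] G) := AddMonoidHom.mk' (fun a => (elemOp a y₀).comp T) fun a b => by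
    rw [elemOp_add_left, ContinuousLinearMap.add_comp]
  have hΦ : Continuous Φ := AddMonoidHomClass.continuous_of_bound Φ (‖y₀‖ * ‖T‖) fun a => calc
    ‖(elemOp a y₀).comp T‖ ≤ ‖elemOp a y₀‖ * ‖T‖ := ContinuousLinearMap.opNorm_comp_le _ _
    _ ≤ ‖y₀‖ * ‖a‖ * ‖T‖ := by grw [norm_elemOp_le]
    _ = ‖y₀‖ * ‖T‖ * ‖a‖ := by ring
  refine mem_closure_of_tendsto ((he.2 x₀).map Φ hΦ)
    (Filter.Eventually.of_forall fun s => Submodule.sum_mem _ fun n _ => Submodule.subset_span ?_)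
  simp only [Function.comp_apply, Φ, AddMonoidHom.mk'_apply, elemOp_comp_of_isAnalysisOp hT]
  exact elemOp_mem_elementaryOps _ _

theorem comp_isAnalysisOp_mem_compactOps {e : ℕ → L} {x : ℕ → E} {T : E →L[ℂ] L}
    (he : IsStdBasis e) (hT : IsAnalysisOp e x T) {U : L →L[ℂ] G} (hU : U ∈ compactOps A L G) :
    U.comp T ∈ compactOps A E G := by
  refine ((ContinuousLinearMap.compL ℂ E L G).flip T).map_mem_closure_span ?_ hU
  rintro _ ⟨x₀, y₀, hV⟩
  rw [ContinuousLinearMap.ext (g := elemOp x₀ y₀) hV]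
  exact elemOp_comp_mem_compactOps he hT x₀ y₀

end Multiplier

theorem generalizedMultiplier_compact_general
    (e : ℕ → L) (he : IsStdBasis e)
    (x : ℕ → E)
    (TX : E →L[ℂ] L) (TY : F →L[ℂ] L) (SY : L →L[ℂ] F)
    (hTX : IsAnalysisOp e x TX)
    (hSY : IsAdjointPairCM A TY SY)
    (U : L →L[ℂ] L)
    (hU : U ∈ closure (Submodule.span ℂ (elementaryOps (A := A) (E := L) (F := L)) :
      Set (L →L[ℂ] L)))
    (M : E →L[ℂ] F) (hM : ∀ v : E, M v = SY (U (TX v))) :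
    M ∈ closure (Submodule.span ℂ (elementaryOps (A := A) (E := E) (F := F)) :
      Set (E →L[ℂ] F)) := by
  rw [ContinuousLinearMap.ext (g := SY.comp (U.comp TX)) hM]
  exact comp_mem_compactOps (S := SY) hSY.map_op_smul (comp_isAnalysisOp_mem_compactOps he hTX hU)

/-- If `U` is a compact operator on `ℓ²(A)`, then the generalized Bessel multiplier
`M_{U,Y,X} = T_Y* U T_X` is compact, i.e. lies in `K(E,F)`, the closed linear span of
the elementary operators. -/
theorem generalizedMultiplier_compact
    (e : ℕ → L) (he : IsStdBasis e)
    (x : ℕ → E) (y : ℕ → F) (D D' : ℝ)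
    (hX : IsBesselSeq x D) (hY : IsBesselSeq y D')
    (TX : E →L[ℂ] L) (TY : F →L[ℂ] L) (SY : L →L[ℂ] F)
    (hTX : IsAnalysisOp e x TX) (hTY : IsAnalysisOp e y TY)
    (hSY : IsAdjointPairCM A TY SY)
    (U : L →L[ℂ] L)
    (hU : U ∈ closure (Submodule.span ℂ (elementaryOps (A := A) (E := L) (F := L)) :
      Set (L →L[ℂ] L)))
    (M : E →L[ℂ] F) (hM : ∀ v : E, M v = SY (U (TX v))) :
    M ∈ closure (Submodule.span ℂ (elementaryOps (A := A) (E := E) (F := F)) :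
      Set (E →L[ℂ] F)) :=
  generalizedMultiplier_compact_general e he x TX TY SY hTX hSY U hU M hM
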